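/- Let A : (0,∞) → ℝ be twice continuously differentiable with A''(y) + (y²/16) A(y) = (y/4) A(y)³ − (3/16) A(y)⁵ for all y > 0, and define E₃(y) = (1/2) A'(y)² + (y²/32) A(y)² − (y/16) A(y)⁴ + (1/32) A(y)⁶. Then for every y > 0 the function y ↦ E₃(y)/y² is differentiable with (d/dy)(E₃(y)/y²) = −A'(y)²/y³ + A(y)⁴/(16 y²) − A(y)⁶/(16 y³); in particular (d/dy)(E₃(y)/y²) ≤ A(y)⁴/(16 y²) for all y > 0. -/

import Mathlib

/-! Differentiating `E₃` and substituting the equation for `A''`, all terms containing `A'`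
cancel and `E₃' = y A² / 16 − A⁴ / 16`. The quotient rule then gives
`(E₃ / y²)' = E₃' / y² − 2 E₃ / y³`, in which the `A²` terms cancel as well; the two remaining
negative terms `−A'² / y³` and `−A⁶ / (16 y³)` can be dropped for the inequality. -/

/-- `E₃`, with `A'` a separate argument so that it can be any derivative of `A`. -/
noncomputable def modifiedEnergy (A A' : ℝ → ℝ) (z : ℝ) : ℝ :=
  1 / 2 * A' z ^ 2 + z ^ 2 / 32 * A z ^ 2 - z / 16 * A z ^ 4 + 1 / 32 * A z ^ 6

theorem hasDerivAt_div_sq {f : ℝ → ℝ} {f' y : ℝ} (hf : HasDerivAt f f' y) (hy : y ≠ 0) :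
    HasDerivAt (fun z => f z / z ^ 2) (f' / y ^ 2 - 2 * f y / y ^ 3) y := by
  have hsq : HasDerivAt (fun z : ℝ => z ^ 2) (2 * y) y := by
    simpa using hasDerivAt_pow 2 y
  refine (hf.div hsq (pow_ne_zero 2 hy)).congr_deriv ?_
  field_simp

theorem ContDiffOn.hasDerivAt_deriv_of_isOpen {A : ℝ → ℝ} {s : Set ℝ}
    (hA : ContDiffOn ℝ 2 A s) (hs : IsOpen s) {y : ℝ} (hy : y ∈ s) :
    HasDerivAt A (deriv A y) y ∧ HasDerivAt (deriv A) (deriv (deriv A) y) y := by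
  have hA' : ContDiffOn ℝ 1 (deriv A) s := hA.deriv_of_isOpen hs (by norm_num)
  exact ⟨((hA.contDiffAt (hs.mem_nhds hy)).differentiableAt (by norm_num)).hasDerivAt,
    ((hA'.contDiffAt (hs.mem_nhds hy)).differentiableAt one_ne_zero).hasDerivAt⟩

theorem hasDerivAt_modifiedEnergy {A A' : ℝ → ℝ} {a'' y : ℝ}
    (hA : HasDerivAt A (A' y) y) (hA' : HasDerivAt A' a'' y) :
    HasDerivAt (modifiedEnergy A A')
      (A' y * (a'' + y ^ 2 / 16 * A y - y / 4 * A y ^ 3 + 3 / 16 * A y ^ 5)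
        + y / 16 * A y ^ 2 - A y ^ 4 / 16) y := by
  have hid := hasDerivAt_id y
  have h := ((((hA'.pow 2).const_mul (1 / 2)).add (((hid.pow 2).div_const 32).mul (hA.pow 2))).sub
    ((hid.div_const 16).mul (hA.pow 4))).add ((hA.pow 6).const_mul (1 / 32))
  refine h.congr_deriv ?_
  simp only [Pi.pow_apply, id, Nat.cast_ofNat]
  ring

theorem hasDerivAt_modifiedEnergy_div_sq {A : ℝ → ℝ} {y : ℝ} (hy : y ≠ 0)
    (hA : HasDerivAt A (deriv A y) y) (hA' : HasDerivAt (deriv A) (deriv (deriv A) y) y)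
    (hODE : deriv (deriv A) y + y ^ 2 / 16 * A y = y / 4 * A y ^ 3 - 3 / 16 * A y ^ 5) :
    HasDerivAt (fun z => modifiedEnergy A (deriv A) z / z ^ 2)
      (-(deriv A y ^ 2) / y ^ 3 + A y ^ 4 / (16 * y ^ 2) - A y ^ 6 / (16 * y ^ 3)) y := by
  have hres : deriv (deriv A) y + y ^ 2 / 16 * A y - y / 4 * A y ^ 3 + 3 / 16 * A y ^ 5 = 0 := by
    linarith
  have hE := hasDerivAt_modifiedEnergy hA hA'
  rw [hres, mul_zero, zero_add] at hE
  refine (hasDerivAt_div_sq hE hy).congr_deriv ?_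
  unfold modifiedEnergy
  field_simp
  ring

/-- For a C² solution of the amplitude equation
`A'' + (y²/16) A = (y/4) A³ − (3/16) A⁵` on `(0,∞)` and the modified energy
`E₃ = (1/2) A'² + (y²/32) A² − (y/16) A⁴ + (1/32) A⁶`, the function `E₃/y²` has
derivative `−A'²/y³ + A⁴/(16y²) − A⁶/(16y³)` at each `y > 0`; in particular this
derivative is at most `A⁴/(16y²)`. -/
theorem stmt_13 (A : ℝ → ℝ) (hA : ContDiffOn ℝ 2 A (Set.Ioi (0 : ℝ)))
    (hODE : ∀ y : ℝ, 0 < y →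
      deriv (deriv A) y + y ^ 2 / 16 * A y = y / 4 * A y ^ 3 - 3 / 16 * A y ^ 5) :
    ∀ y : ℝ, 0 < y →
      HasDerivAt
        (fun z : ℝ =>
          (1 / 2 * deriv A z ^ 2 + z ^ 2 / 32 * A z ^ 2 - z / 16 * A z ^ 4
            + 1 / 32 * A z ^ 6) / z ^ 2)
        (-(deriv A y ^ 2) / y ^ 3 + A y ^ 4 / (16 * y ^ 2) - A y ^ 6 / (16 * y ^ 3)) y ∧
      -(deriv A y ^ 2) / y ^ 3 + A y ^ 4 / (16 * y ^ 2) - A y ^ 6 / (16 * y ^ 3)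
        ≤ A y ^ 4 / (16 * y ^ 2) := by
  intro y hy
  obtain ⟨hA₁, hA₂⟩ := hA.hasDerivAt_deriv_of_isOpen isOpen_Ioi hy
  refine ⟨hasDerivAt_modifiedEnergy_div_sq hy.ne' hA₁ hA₂ (hODE y hy), ?_⟩
  have hA'_sq : 0 ≤ deriv A y ^ 2 / y ^ 3 := by positivity
  have hA_six : 0 ≤ A y ^ 6 / (16 * y ^ 3) := by positivity
  rw [neg_div]
  linarith
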